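/- Left endpoints of gaps have eventually-periodic form (the concrete form of Lemma 5.6): for every x ∈ (0,1) with x ∉ K, the set K ∩ (−∞, x] has a greatest element c, and there exist j ≥ 1 and Y ⊆ {1,…,j−1} such that c = h(Y) + 1/q j. -/
import Mathlib

open Filter Finset

/-- The sum `h(X) := ∑_{n ∈ X} (1/q(n-1) - 1/q n)` associated to a set `X` of
positive natural numbers. -/
noncomputable def hK (q : ℕ → ℝ) (X : Set ℕ) : ℝ :=
  ∑' n : ℕ, Set.indicator X (fun m => 1 / q (m - 1) - 1 / q m) n

/-- The Cantor-type set `K`, the range of `h` over subsets of `{1,2,3,…}`. -/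
def Kset (q : ℕ → ℝ) : Set ℝ :=
  {x | ∃ X : Set ℕ, (∀ n ∈ X, 1 ≤ n) ∧ hK q X = x}

namespace Stmt13

/-- The individual terms. -/
noncomputable def f (q : ℕ → ℝ) (n : ℕ) : ℝ := 1 / q (n - 1) - 1 / q n

lemma hK_def (q : ℕ → ℝ) (X : Set ℕ) : hK q X = ∑' n : ℕ, X.indicator (f q) n := rfl

section

variable {q : ℕ → ℝ} (hq0 : q 0 = 1) (hqpos : ∀ k, 0 < q k)
  (hqgrow : ∀ k, q (k + 1) > 3 * q k)

include hq0 hqpos hqgrow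

lemma q_ge : ∀ n, (3 : ℝ) ^ n ≤ q n := by
  intro n
  induction n with
  | zero => simp [hq0]
  | succ k ih =>
      have := hqgrow k
      have h3 : (3:ℝ) ^ (k+1) = 3 * 3 ^ k := by ring
      nlinarith [hqpos k]

lemma q_mono : Monotone q := by
  apply monotone_nat_of_le_succ
  intro n
  nlinarith [hqgrow n, hqpos n]

lemma inv_q_le (n : ℕ) : 1 / q n ≤ (1/3 : ℝ) ^ n := by
  have h1 : (0:ℝ) < 3 ^ n := by positivity
  have h2 := q_ge hq0 hqpos hqgrow n
  calc 1 / q n ≤ 1 / (3:ℝ)^n := by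
        apply one_div_le_one_div_of_le h1 h2
    _ = (1/3:ℝ)^n := by rw [div_pow, one_pow]

lemma f_nonneg (n : ℕ) : 0 ≤ f q n := by
  have h1 : q (n - 1) ≤ q n := q_mono hq0 hqpos hqgrow (Nat.sub_le n 1)
  have h2 := hqpos (n - 1)
  have : 1 / q n ≤ 1 / q (n - 1) := one_div_le_one_div_of_le h2 h1
  simp only [f]; linarith

lemma f_le (n : ℕ) : f q n ≤ 3 * (1/3 : ℝ) ^ n := by
  have h1 : f q n ≤ 1 / q (n - 1) := by
    have := hqpos n
    have : 0 < 1 / q n := by positivity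
    simp only [f]; linarith
  have h2 : 1 / q (n - 1) ≤ (1/3:ℝ) ^ (n - 1) := inv_q_le hq0 hqpos hqgrow (n - 1)
  have h3 : (1/3:ℝ) ^ (n - 1) ≤ 3 * (1/3:ℝ) ^ n := by
    cases n with
    | zero => norm_num
    | succ k => simp only [Nat.add_sub_cancel]; rw [pow_succ]; ring_nf; nlinarith [pow_pos (by norm_num : (0:ℝ) < 1/3) k]
  linarith

lemma summable_f : Summable (f q) := by
  apply Summable.of_nonneg_of_le (f_nonneg hq0 hqpos hqgrow) (f_le hq0 hqpos hqgrow)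
  exact (summable_geometric_of_lt_one (by norm_num) (by norm_num)).mul_left 3

lemma summable_ind (X : Set ℕ) : Summable (X.indicator (f q)) :=
  (summable_f hq0 hqpos hqgrow).indicator X

lemma ind_nonneg (X : Set ℕ) (n : ℕ) : 0 ≤ X.indicator (f q) n :=
  Set.indicator_nonneg (fun m _ => f_nonneg hq0 hqpos hqgrow m) n

lemma f_gt (k : ℕ) : 1 / q (k + 1) < f q (k + 1) := by
  have hp := hqpos k
  have hp1 := hqpos (k + 1)
  have hg := hqgrow k
  have h2 : (2:ℝ) / q (k+1) < 1 / q k := by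
    rw [div_lt_div_iff₀ hp1 hp]; nlinarith
  have h3 : (2:ℝ) / q (k+1) = 1 / q (k+1) + 1 / q (k+1) := by ring
  simp only [f, Nat.add_sub_cancel]
  linarith

lemma telescope (j : ℕ) : ∀ m : ℕ,
    ∑ n ∈ Finset.range (m + (j + 1)), (Set.Ioi j).indicator (f q) n
      = 1 / q j - 1 / q (j + m) := by
  intro m
  induction m with
  | zero =>
      have hz : ∀ n ∈ Finset.range (0 + (j + 1)), (Set.Ioi j).indicator (f q) n = 0 := by
        intro n hn
        rw [Finset.mem_range] at hn
        exact Set.indicator_of_notMem (by simp only [Set.mem_Ioi]; omega) _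
      rw [Finset.sum_eq_zero hz]
      simp
  | succ m ih =>
      have hr : m + 1 + (j + 1) = (m + (j + 1)) + 1 := by omega
      rw [hr, Finset.sum_range_succ, ih]
      have hmem : m + (j + 1) ∈ Set.Ioi j := by simp [Set.mem_Ioi]; omega
      rw [Set.indicator_of_mem hmem]
      have h1 : m + (j + 1) - 1 = j + m := by omega
      simp only [f, h1]
      have h2 : m + (j + 1) = j + (m + 1) := by omega
      rw [h2]
      ring

lemma inv_q_tendsto (j : ℕ) : Tendsto (fun m => 1 / q (j + m)) atTop (nhds 0) := by
  apply squeeze_zero (fun m => by have := hqpos (j + m); positivity)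
    (fun m => ?_) (tendsto_pow_atTop_nhds_zero_of_lt_one (by norm_num : (0:ℝ) ≤ 1/3) (by norm_num))
  calc 1 / q (j + m) ≤ (1/3:ℝ) ^ (j + m) := inv_q_le hq0 hqpos hqgrow (j + m)
    _ ≤ (1/3:ℝ) ^ m := pow_le_pow_of_le_one (by norm_num) (by norm_num) (by omega)

lemma tail_sum (j : ℕ) : hK q (Set.Ioi j) = 1 / q j := by
  have hs := summable_ind hq0 hqpos hqgrow (Set.Ioi j)
  have h1 : Tendsto (fun m => ∑ n ∈ Finset.range (m + (j + 1)), (Set.Ioi j).indicator (f q) n)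
      atTop (nhds (hK q (Set.Ioi j))) := by
    rw [hK_def]
    exact hs.hasSum.tendsto_sum_nat.comp (Filter.tendsto_add_atTop_nat (j + 1))
  have h2 : Tendsto (fun m => 1 / q j - 1 / q (j + m)) atTop (nhds (1 / q j - 0)) :=
    tendsto_const_nhds.sub (inv_q_tendsto hq0 hqpos hqgrow j)
  rw [sub_zero] at h2
  have h3 := h1.congr (fun m => telescope hq0 hqpos hqgrow j m)
  exact tendsto_nhds_unique h3 h2

lemma hK_union {Y T : Set ℕ} (h : Disjoint Y T) : hK q (Y ∪ T) = hK q Y + hK q T := by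
  rw [hK_def, hK_def, hK_def, ← Summable.tsum_add (summable_ind hq0 hqpos hqgrow Y)
    (summable_ind hq0 hqpos hqgrow T)]
  congr 1
  exact Set.indicator_union_of_disjoint h (f q)

lemma tsum_tail_le (Z : Set ℕ) (n : ℕ) :
    ∑' i : ℕ, Z.indicator (f q) (i + (n + 1)) ≤ 1 / q n := by
  have hs1 : Summable (fun i => Z.indicator (f q) (i + (n + 1))) :=
    (summable_nat_add_iff (n + 1)).mpr (summable_ind hq0 hqpos hqgrow Z)
  have hs2 : Summable (fun i => (Set.Ioi n).indicator (f q) (i + (n + 1))) :=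
    (summable_nat_add_iff (n + 1)).mpr (summable_ind hq0 hqpos hqgrow (Set.Ioi n))
  have hle : ∀ i, Z.indicator (f q) (i + (n + 1)) ≤ (Set.Ioi n).indicator (f q) (i + (n + 1)) := by
    intro i
    have hmem : i + (n + 1) ∈ Set.Ioi n := by simp [Set.mem_Ioi]; omega
    rw [Set.indicator_of_mem hmem]
    by_cases hz : i + (n + 1) ∈ Z
    · rw [Set.indicator_of_mem hz]
    · rw [Set.indicator_of_notMem hz]
      exact f_nonneg hq0 hqpos hqgrow _
  have h1 : ∑' i : ℕ, Z.indicator (f q) (i + (n + 1))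
      ≤ ∑' i : ℕ, (Set.Ioi n).indicator (f q) (i + (n + 1)) := Summable.tsum_le_tsum hle hs1 hs2
  have h2 : ∑' i : ℕ, (Set.Ioi n).indicator (f q) (i + (n + 1)) = 1 / q n := by
    have h3 := Summable.sum_add_tsum_nat_add (f := (Set.Ioi n).indicator (f q)) (n + 1)
      (summable_ind hq0 hqpos hqgrow (Set.Ioi n))
    have h4 : ∑ i ∈ Finset.range (n + 1), (Set.Ioi n).indicator (f q) i = 0 := by
      apply Finset.sum_eq_zero
      intro i hi
      rw [Finset.mem_range] at hi
      exact Set.indicator_of_notMem (by simp [Set.mem_Ioi]; omega) _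
    rw [h4, zero_add] at h3
    rw [h3, ← hK_def, tail_sum hq0 hqpos hqgrow]
  linarith

end

/-- Greedy partial sums. -/
noncomputable def gs (q : ℕ → ℝ) (x : ℝ) : ℕ → ℝ
  | 0 => 0
  | (n + 1) => if gs q x n + f q (n + 1) ≤ x then gs q x n + f q (n + 1) else gs q x n

/-- The greedy set. -/
def Xg (q : ℕ → ℝ) (x : ℝ) : Set ℕ := {n | 1 ≤ n ∧ gs q x (n - 1) + f q n ≤ x}

lemma mem_Xg {q : ℕ → ℝ} {x : ℝ} {n : ℕ} :
    n ∈ Xg q x ↔ 1 ≤ n ∧ gs q x (n - 1) + f q n ≤ x := Iff.rfl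

lemma gs_eq_sum (q : ℕ → ℝ) (x : ℝ) (n : ℕ) :
    gs q x n = ∑ m ∈ Finset.range (n + 1), (Xg q x).indicator (f q) m := by
  induction n with
  | zero =>
      simp only [gs, zero_add, Finset.sum_range_one]
      rw [Set.indicator_of_notMem (show (0:ℕ) ∉ Xg q x by simp [Xg])]
  | succ k ih =>
      rw [Finset.sum_range_succ, ← ih]
      by_cases h : gs q x k + f q (k + 1) ≤ x
      · rw [Set.indicator_of_mem (by exact ⟨Nat.le_add_left 1 k, by simpa using h⟩)]
        simp only [gs, if_pos h]
      · rw [Set.indicator_of_notMem (by intro hc; exact h (by simpa using hc.2))]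
        simp only [gs, if_neg h, add_zero]

lemma gs_le {q : ℕ → ℝ} {x : ℝ} (hx : 0 ≤ x) (n : ℕ) : gs q x n ≤ x := by
  induction n with
  | zero => simpa [gs] using hx
  | succ k ih =>
      by_cases h : gs q x k + f q (k + 1) ≤ x
      · simpa only [gs, if_pos h] using h
      · simpa only [gs, if_neg h] using ih

end Stmt13

open Stmt13 in
/-- Left endpoints of gaps: for `x ∈ (0,1)` with `x ∉ K`, the set `K ∩ (-∞, x]`
has a greatest element `c`, and `c = h(Y) + 1/q j` for some `j ≥ 1` and some
`Y ⊆ {1,…,j-1}`. -/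
theorem stmt_13 (q : ℕ → ℝ) (hq0 : q 0 = 1) (hqpos : ∀ k, 0 < q k)
    (hqgrow : ∀ k, q (k + 1) > 3 * q k)
    (x : ℝ) (hx : x ∈ Set.Ioo (0 : ℝ) 1) (hxK : x ∉ Kset q) :
    ∃ c : ℝ, IsGreatest (Kset q ∩ Set.Iic x) c ∧
      ∃ j : ℕ, 1 ≤ j ∧ ∃ Y : Set ℕ, Y ⊆ Set.Icc 1 (j - 1) ∧
        c = hK q Y + 1 / q j := by
  classical
  obtain ⟨hx0, hx1⟩ := hx
  set X := Xg q x with hX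
  set c := hK q X with hc
  have hsumX := summable_ind hq0 hqpos hqgrow X
  have hindnn := ind_nonneg hq0 hqpos hqgrow
  -- partial sums of X ≤ c
  have hgs_le_c : ∀ n, gs q x n ≤ c := by
    intro n
    rw [gs_eq_sum, hc, hK_def]
    exact Summable.sum_le_tsum _ (fun i _ => hindnn X i) hsumX
  -- c ≤ x
  have hcx : c ≤ x := by
    rw [hc, hK_def]
    apply Summable.tsum_le_of_sum_range_le hsumX
    intro n
    cases n with
    | zero => simpa using hx0.le
    | succ k => rw [← gs_eq_sum]; exact gs_le hx0.le k
  have hcK : c ∈ Kset q := ⟨X, fun n hn => hn.1, rfl⟩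
  -- upper bound property
  have hub : ∀ y ∈ Kset q ∩ Set.Iic x, y ≤ c := by
    rintro y ⟨⟨Z, hZ1, rfl⟩, hyx⟩
    have hyx' : hK q Z ≤ x := hyx
    by_contra hlt
    push_neg at hlt
    have hsumZ := summable_ind hq0 hqpos hqgrow Z
    have hne : ∃ n, ¬(n ∈ Z ↔ n ∈ X) := by
      by_contra hno
      simp only [not_exists, not_not] at hno
      have : Z = X := Set.ext hno
      rw [this] at hlt
      exact lt_irrefl _ hlt
    obtain ⟨k, hk⟩ : ∃ k, Nat.find hne = k + 1 := by
      have h0 : Nat.find hne ≠ 0 := by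
        intro h0
        have hd := Nat.find_spec hne
        rw [h0] at hd
        apply hd
        constructor
        · intro h; exact absurd (hZ1 0 h) (by norm_num)
        · intro h; exact absurd (mem_Xg.mp h).1 (by norm_num)
      exact ⟨Nat.find hne - 1, by omega⟩
    have hdiff : ¬((k + 1) ∈ Z ↔ (k + 1) ∈ X) := hk ▸ Nat.find_spec hne
    have hmin : ∀ m < k + 1, (m ∈ Z ↔ m ∈ X) := by
      intro m hm
      exact not_not.mp (Nat.find_min hne (by omega))
    have hagree : ∑ m ∈ Finset.range (k + 1), Z.indicator (f q) m = gs q x k := by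
      rw [gs_eq_sum]
      apply Finset.sum_congr rfl
      intro m hm
      rw [Finset.mem_range] at hm
      have := hmin m hm
      by_cases hmZ : m ∈ Z
      · rw [Set.indicator_of_mem hmZ, Set.indicator_of_mem (this.mp hmZ)]
      · rw [Set.indicator_of_notMem hmZ, Set.indicator_of_notMem (fun hc => hmZ (this.mpr hc))]
    by_cases hnZ : (k + 1) ∈ Z
    · have hnX : (k + 1) ∉ X := fun h => hdiff (iff_of_true hnZ h)
      have hgt : gs q x k + f q (k + 1) > x := by
        by_contra h
        push_neg at h
        exact hnX ⟨Nat.le_add_left 1 k, by simpa using h⟩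
      have hle : gs q x k + f q (k + 1) ≤ hK q Z := by
        rw [hK_def]
        calc gs q x k + f q (k + 1)
            = ∑ m ∈ Finset.range (k + 1), Z.indicator (f q) m + Z.indicator (f q) (k + 1) := by
              rw [hagree, Set.indicator_of_mem hnZ]
          _ = ∑ m ∈ Finset.range (k + 2), Z.indicator (f q) m := (Finset.sum_range_succ _ _).symm
          _ ≤ ∑' m, Z.indicator (f q) m := Summable.sum_le_tsum _ (fun i _ => hindnn Z i) hsumZ
      linarith
    · have hnX : (k + 1) ∈ X := by
        by_contra h
        exact hdiff (iff_of_false hnZ h)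
      have h1 : hK q Z = ∑ m ∈ Finset.range (k + 2), Z.indicator (f q) m
          + ∑' i : ℕ, Z.indicator (f q) (i + (k + 2)) := by
        rw [hK_def]
        exact (Summable.sum_add_tsum_nat_add (k + 2) hsumZ).symm
      have h2 : ∑ m ∈ Finset.range (k + 2), Z.indicator (f q) m = gs q x k := by
        rw [Finset.sum_range_succ, hagree, Set.indicator_of_notMem hnZ, add_zero]
      have h3 : ∑' i : ℕ, Z.indicator (f q) (i + (k + 2)) ≤ 1 / q (k + 1) :=
        tsum_tail_le hq0 hqpos hqgrow Z (k + 1)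
      have h4 : 1 / q (k + 1) < f q (k + 1) := f_gt hq0 hqpos hqgrow k
      have h5 : gs q x (k + 1) = gs q x k + f q (k + 1) := by
        simp only [gs, if_pos (show gs q x k + f q (k+1) ≤ x by simpa using hnX.2)]
      have h6 := hgs_le_c (k + 1)
      rw [h5] at h6
      rw [h1, h2] at hlt
      linarith
  have hclt : c < x := lt_of_le_of_ne hcx (fun h => hxK (h ▸ hcK))
  -- eventually all in X
  set δ := x - c with hδ
  have hδpos : 0 < δ := by simp [hδ]; linarith
  obtain ⟨M, hM⟩ : ∃ M : ℕ, (3:ℝ) * (1/3)^M < δ := by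
    obtain ⟨M, hM⟩ := exists_pow_lt_of_lt_one (show (0:ℝ) < δ/3 by linarith) (show (1/3:ℝ) < 1 by norm_num)
    exact ⟨M, by linarith⟩
  have hall : ∀ n, M < n → n ∈ X := by
    intro n hn
    by_contra h
    have hn1 : 1 ≤ n := by omega
    have hgt : gs q x (n - 1) + f q n > x := by
      by_contra hh
      push_neg at hh
      exact h ⟨hn1, hh⟩
    have hfn : f q n > δ := by
      have := hgs_le_c (n - 1)
      simp only [hδ]
      linarith
    have hfle : f q n ≤ 3 * (1/3:ℝ)^n := f_le hq0 hqpos hqgrow n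
    have : (3:ℝ) * (1/3)^n ≤ 3 * (1/3)^M := by
      have := pow_le_pow_of_le_one (show (0:ℝ) ≤ 1/3 by norm_num) (show (1/3:ℝ) ≤ 1 by norm_num) hn.le
      linarith
    linarith
  -- some positive number is missing from X
  have hmiss : ∃ m, 1 ≤ m ∧ m ∉ X := by
    by_contra h
    push_neg at h
    have hXeq : X = Set.Ioi 0 := by
      ext n
      simp only [Set.mem_Ioi]
      constructor
      · intro hn; exact hn.1
      · intro hn; exact h n hn
    have : c = 1 := by
      rw [hc, hXeq, tail_sum hq0 hqpos hqgrow 0, hq0]; norm_num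
    linarith
  obtain ⟨m0, hm01, hm0X⟩ := hmiss
  have hm0M : m0 ≤ M := by
    by_contra h
    push_neg at h
    exact hm0X (hall m0 h)
  set j := Nat.findGreatest (fun m => 1 ≤ m ∧ m ∉ X) M with hj
  have hPj : 1 ≤ j ∧ j ∉ X :=
    Nat.findGreatest_spec (P := fun m => 1 ≤ m ∧ m ∉ X) hm0M ⟨hm01, hm0X⟩
  have hjgt : ∀ n, j < n → n ∈ X := by
    intro n hn
    by_cases hnM : n ≤ M
    · by_contra h
      exact Nat.findGreatest_is_greatest (P := fun m => 1 ≤ m ∧ m ∉ X) hn hnM ⟨by omega, h⟩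
    · exact hall n (by omega)
  -- decompose X
  set Y := X ∩ Set.Iio j with hY
  have hXdecomp : X = Y ∪ Set.Ioi j := by
    ext n
    constructor
    · intro hn
      rcases lt_trichotomy n j with h | h | h
      · exact Or.inl ⟨hn, h⟩
      · exact absurd (h ▸ hn) hPj.2
      · exact Or.inr h
    · rintro (⟨hn, _⟩ | hn)
      · exact hn
      · exact hjgt n hn
  have hdisj : Disjoint Y (Set.Ioi j) := by
    rw [Set.disjoint_left]
    rintro a ⟨_, ha⟩ ha'
    simp only [Set.mem_Iio] at ha
    simp only [Set.mem_Ioi] at ha'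
    omega
  refine ⟨c, ⟨⟨hcK, hcx⟩, hub⟩, j, hPj.1, Y, ?_, ?_⟩
  · rintro m ⟨hmX, hmj⟩
    exact ⟨hmX.1, Nat.le_pred_of_lt hmj⟩
  · rw [hc, hXdecomp, hK_union hq0 hqpos hqgrow hdisj, tail_sum hq0 hqpos hqgrow]
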